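/- Let A be an abelian category and C a class of objects of A closed under images (for every morphism f : C₁ → C₂ with C₁, C₂ ∈ C, the image of f lies in C) and closed under extensions. Then C = T(C) ∩ F(C), where T(C) is the smallest torsion class containing C and F(C) is the smallest torsion-free class containing C. -/

import Mathlib

open CategoryTheory CategoryTheory.Limits

/-- A torsion class in an abelian category: a class of objects closed under
quotients (epimorphic images) and extensions. -/
def IsTorsionClass {C : Type*} [Category C] [Abelian C] (T : Set C) : Prop :=
  (∀ ⦃X Y : C⦄ (f : X ⟶ Y), Epi f → X ∈ T → Y ∈ T) ∧
  (∀ S : ShortComplex C, S.ShortExact → S.X₁ ∈ T → S.X₃ ∈ T → S.X₂ ∈ T)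

/-- A torsion-free class in an abelian category: a class of objects closed under
subobjects and extensions. -/
def IsTorsionFreeClass {C : Type*} [Category C] [Abelian C] (F : Set C) : Prop :=
  (∀ ⦃X Y : C⦄ (f : X ⟶ Y), Mono f → Y ∈ F → X ∈ F) ∧
  (∀ S : ShortComplex C, S.ShortExact → S.X₁ ∈ F → S.X₃ ∈ F → S.X₂ ∈ F)

/-- The smallest torsion class containing a class of objects. -/
def torsionClosure {C : Type*} [Category C] [Abelian C] (S : Set C) : Set C :=
  sInf {T : Set C | IsTorsionClass T ∧ S ⊆ T}

/-- The smallest torsion-free class containing a class of objects. -/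
def torsionFreeClosure {C : Type*} [Category C] [Abelian C] (S : Set C) : Set C :=
  sInf {F : Set C | IsTorsionFreeClass F ∧ S ⊆ F}

/-!
Objects of `T(S)` have a finite filtration whose factors are quotients of objects of `S`;
dually (in the opposite category) objects of `F(S)` have a finite filtration whose factors are
subobjects of objects of `S`. Let `X` lie in both, and induct on the sum of the two lengths.
The bottom step `K` of the first filtration is a subobject of `X`, hence lies in `S`; pulling
the extension `0 → K → X → Q → 0` back along an epimorphism `P ↠ Q` with `P ∈ S` gives an
extension of `P` by `K`, which lies in `S` and maps onto `X`. Dually `X` embeds into an object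
of `S`, so `X` is the image of a morphism between objects of `S`.
-/

namespace TorsionTheory

open Opposite

variable {C : Type*} [Category C]

def quotients (S : Set C) : Set C := {Y | ∃ X ∈ S, ∃ f : X ⟶ Y, Epi f}

lemma subset_quotients (S : Set C) : S ⊆ quotients S :=
  fun X hX => ⟨X, hX, 𝟙 X, inferInstance⟩

lemma mem_quotients_of_epi {S : Set C} {X Y : C} (f : X ⟶ Y) [Epi f] (hX : X ∈ quotients S) :
    Y ∈ quotients S := by
  obtain ⟨Z, hZ, g, _⟩ := hX
  exact ⟨Z, hZ, g ≫ f, epi_comp g f⟩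

variable [Abelian C]

def IsExtensionClosed (S : Set C) : Prop :=
  ∀ T : ShortComplex C, T.ShortExact → T.X₁ ∈ S → T.X₃ ∈ S → T.X₂ ∈ S

lemma IsExtensionClosed.op {S : Set C} (hS : IsExtensionClosed S) : IsExtensionClosed S.op :=
  fun T hT h₁ h₃ => hS T.unop hT.unop h₃ h₁

lemma IsTorsionClass.unop {T : Set Cᵒᵖ} (hT : IsTorsionClass T) : IsTorsionFreeClass T.unop :=
  ⟨fun _ _ f _ hY => hT.1 f.op inferInstance hY, fun S hS h₁ h₃ => hT.2 S.op hS.op h₃ h₁⟩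

lemma subset_torsionClosure (S : Set C) : S ⊆ torsionClosure S :=
  le_sInf fun _ hT => hT.2

lemma torsionClosure_subset {S T : Set C} (hT : IsTorsionClass T) (hST : S ⊆ T) :
    torsionClosure S ⊆ T :=
  sInf_le ⟨hT, hST⟩

lemma subset_torsionFreeClosure (S : Set C) : S ⊆ torsionFreeClosure S :=
  le_sInf fun _ hF => hF.2

lemma torsionFreeClosure_subset {S F : Set C} (hF : IsTorsionFreeClass F) (hSF : S ⊆ F) :
    torsionFreeClosure S ⊆ F :=
  sInf_le ⟨hF, hSF⟩

lemma shortExact_kernel_of_epi {X Y : C} (p : X ⟶ Y) [Epi p] :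
    (ShortComplex.mk (kernel.ι p) p (kernel.condition p)).ShortExact :=
  .mk' (ShortComplex.kernelSequence_exact p) inferInstance inferInstance

lemma shortExact_pullback_snd {T : ShortComplex C} (hT : T.ShortExact) {Y : C} (c : Y ⟶ T.X₃) :
    (ShortComplex.mk (pullback.lift T.f 0 (by simp)) (pullback.snd T.g c)
      (pullback.lift_snd _ _ _)).ShortExact := by
  have := hT.mono_f
  have := hT.epi_g
  have : Mono (pullback.lift T.f (0 : T.X₁ ⟶ Y) (by simp) : T.X₁ ⟶ pullback T.g c) :=
    mono_of_mono_fac (pullback.lift_fst _ _ _)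
  refine .mk' (ShortComplex.exact_of_f_is_kernel _ (KernelFork.IsLimit.ofι' _ _ ?_))
    this inferInstance
  intro A x hx
  obtain ⟨l, hl⟩ := KernelFork.IsLimit.lift' hT.fIsKernel (x ≫ pullback.fst T.g c)
    (by simp [pullback.condition, reassoc_of% hx])
  refine ⟨l, pullback.hom_ext ?_ ?_⟩
  · dsimp only
    rw [Category.assoc, pullback.lift_fst]
    exact hl
  · dsimp only at hx ⊢
    rw [Category.assoc, pullback.lift_snd, comp_zero, hx]

lemma shortExact_pullback_fst {U : ShortComplex C} (hU : U.ShortExact) {X : C} (g : X ⟶ U.X₂)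
    [Epi g] :
    (ShortComplex.mk (pullback.fst g U.f) (g ≫ U.g)
      (by rw [pullback.condition_assoc, U.zero, comp_zero])).ShortExact := by
  have := hU.mono_f
  have := hU.epi_g
  refine .mk' (ShortComplex.exact_of_f_is_kernel _ (KernelFork.IsLimit.ofι' _ _ ?_))
    inferInstance (epi_comp _ _)
  intro A x hx
  obtain ⟨l, hl⟩ := KernelFork.IsLimit.lift' hU.fIsKernel (x ≫ g) (by simpa using hx)
  exact ⟨pullback.lift x l hl.symm, pullback.lift_fst _ _ _⟩

lemma mem_quotients_of_shortExact {S : Set C} (hS : IsExtensionClosed S) {T : ShortComplex C}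
    (hT : T.ShortExact) (h₁ : T.X₁ ∈ S) (h₃ : T.X₃ ∈ quotients S) : T.X₂ ∈ quotients S := by
  obtain ⟨Y, hY, c, _⟩ := h₃
  exact ⟨_, hS _ (shortExact_pullback_snd hT c) h₁ hY, pullback.fst T.g c, inferInstance⟩

lemma mem_of_mem_quotients_of_op_mem_quotients {S : Set C}
    (hiso : ∀ ⦃X Y : C⦄, (X ≅ Y) → X ∈ S → Y ∈ S)
    (himg : ∀ ⦃X Y : C⦄ (f : X ⟶ Y), X ∈ S → Y ∈ S → image f ∈ S) {X : C}
    (hquo : X ∈ quotients S) (hsub : op X ∈ quotients S.op) : X ∈ S := by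
  obtain ⟨P, hP, p, _⟩ := hquo
  obtain ⟨Q, hQ, i, _⟩ := hsub
  have : StrongEpi p := strongEpi_of_epi p
  exact hiso (image.isoStrongEpiMono p i.unop rfl).symm (himg _ hP hQ)

/-- `quotFiltration S m` consists of the objects with a filtration of length `m + 1` whose
factors lie in `quotients S`. -/
def quotFiltration (S : Set C) : ℕ → Set C
  | 0 => quotients S
  | m + 1 => {X | ∃ (K Q : C) (i : K ⟶ X) (p : X ⟶ Q) (w : i ≫ p = 0),
      (ShortComplex.mk i p w).ShortExact ∧ K ∈ quotFiltration S m ∧ Q ∈ quotients S}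

lemma mem_quotFiltration_of_epi {S : Set C} {m : ℕ} {X Y : C} (f : X ⟶ Y) [Epi f]
    (hX : X ∈ quotFiltration S m) : Y ∈ quotFiltration S m := by
  induction m generalizing X Y with
  | zero => exact mem_quotients_of_epi f hX
  | succ m ih =>
    obtain ⟨K, Q, i, p, w, hT, hK, hQ⟩ := hX
    refine ⟨_, _, _, _, _, shortExact_kernel_of_epi (cokernel.π (i ≫ f)),
      ih (Abelian.factorThruImage (i ≫ f)) hK, ?_⟩
    obtain ⟨φ, hφ⟩ := CokernelCofork.IsColimit.desc' hT.gIsCokernel (f ≫ cokernel.π (i ≫ f))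
      (by rw [← Category.assoc, cokernel.condition])
    have : Epi φ := epi_of_epi_fac hφ
    exact mem_quotients_of_epi φ hQ

lemma mem_quotFiltration_of_shortExact {S : Set C} {a b : ℕ} {T : ShortComplex C}
    (hT : T.ShortExact) (h₁ : T.X₁ ∈ quotFiltration S a) (h₃ : T.X₃ ∈ quotFiltration S b) :
    T.X₂ ∈ quotFiltration S (a + b + 1) := by
  induction b generalizing T with
  | zero => exact ⟨_, _, T.f, T.g, T.zero, hT, h₁, h₃⟩
  | succ b ih =>
    obtain ⟨K, Q, i, p, w, hU, hK, hQ⟩ := h₃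
    have := hT.epi_g
    exact ⟨_, _, _, _, _, shortExact_pullback_fst hU T.g,
      ih (shortExact_pullback_snd hT i) h₁ hK, hQ⟩

lemma isTorsionClass_iUnion_quotFiltration (S : Set C) :
    IsTorsionClass (⋃ m, quotFiltration S m) := by
  refine ⟨fun X Y f _ hX => ?_, fun T hT h₁ h₃ => ?_⟩
  · obtain ⟨m, hm⟩ := Set.mem_iUnion.1 hX
    exact Set.mem_iUnion.2 ⟨m, mem_quotFiltration_of_epi f hm⟩
  · obtain ⟨a, ha⟩ := Set.mem_iUnion.1 h₁
    obtain ⟨b, hb⟩ := Set.mem_iUnion.1 h₃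
    exact Set.mem_iUnion.2 ⟨_, mem_quotFiltration_of_shortExact hT ha hb⟩

lemma subset_iUnion_quotFiltration (S : Set C) : S ⊆ ⋃ m, quotFiltration S m :=
  (subset_quotients S).trans (Set.subset_iUnion (quotFiltration S) 0)

lemma mem_quotients_of_mem_quotFiltration_succ {S : Set C} (hS : IsExtensionClosed S) {m : ℕ}
    {X : C} (hX : X ∈ quotFiltration S (m + 1))
    (hsub : ∀ ⦃K : C⦄ (i : K ⟶ X), Mono i → K ∈ quotFiltration S m → K ∈ S) :
    X ∈ quotients S := by
  obtain ⟨K, Q, i, p, w, hT, hK, hQ⟩ := hX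
  exact mem_quotients_of_shortExact hS hT (hsub i hT.mono_f hK) hQ

theorem mem_of_mem_quotFiltration_of_op_mem_quotFiltration {S : Set C}
    (hiso : ∀ ⦃X Y : C⦄, (X ≅ Y) → X ∈ S → Y ∈ S)
    (himg : ∀ ⦃X Y : C⦄ (f : X ⟶ Y), X ∈ S → Y ∈ S → image f ∈ S)
    (hext : IsExtensionClosed S) {m n : ℕ} {X : C}
    (hm : X ∈ quotFiltration S m) (hn : op X ∈ quotFiltration S.op n) : X ∈ S := by
  induction h : m + n using Nat.strong_induction_on generalizing m n X with
  | _ N ih =>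
  subst h
  have hquo : X ∈ quotients S := by
    cases m with
    | zero => exact hm
    | succ m =>
      exact mem_quotients_of_mem_quotFiltration_succ hext hm fun K i _ hK =>
        ih (m + n) (by omega) hK (mem_quotFiltration_of_epi i.op hn) rfl
  have hsub : op X ∈ quotients S.op := by
    cases n with
    | zero => exact hn
    | succ n =>
      exact mem_quotients_of_mem_quotFiltration_succ hext.op hn fun K i _ hK =>
        ih (m + n) (by omega) (mem_quotFiltration_of_epi i.unop hm) hK rfl
  exact mem_of_mem_quotients_of_op_mem_quotients hiso himg hquo hsub

end TorsionTheory

open TorsionTheory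

/-- a class of objects of an abelian category (closed under
isomorphisms) which is closed under images and extensions equals the intersection
of its torsion closure and its torsion-free closure. -/
theorem stmt_18 {C : Type*} [Category C] [Abelian C] (S : Set C)
    (hiso : ∀ ⦃X Y : C⦄, (X ≅ Y) → X ∈ S → Y ∈ S)
    (himg : ∀ ⦃X Y : C⦄ (f : X ⟶ Y), X ∈ S → Y ∈ S → image f ∈ S)
    (hext : ∀ Sc : ShortComplex C, Sc.ShortExact → Sc.X₁ ∈ S → Sc.X₃ ∈ S → Sc.X₂ ∈ S) :
    S = torsionClosure S ∩ torsionFreeClosure S := by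
  refine (Set.subset_inter (subset_torsionClosure S) (subset_torsionFreeClosure S)).antisymm ?_
  rintro X ⟨hT, hF⟩
  obtain ⟨m, hm⟩ := Set.mem_iUnion.1 <| torsionClosure_subset
    (isTorsionClass_iUnion_quotFiltration S) (subset_iUnion_quotFiltration S) hT
  obtain ⟨n, hn⟩ := Set.mem_iUnion.1 <| torsionFreeClosure_subset
    (isTorsionClass_iUnion_quotFiltration S.op).unop
    (fun _ hX => subset_iUnion_quotFiltration S.op hX) hF
  exact mem_of_mem_quotFiltration_of_op_mem_quotFiltration hiso himg hext hm hn
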